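/- Let p be a prime, let 𝓛_1, …, 𝓛_k be systems of linear forms over F_p, and let f : F_p^n → (0,1) be such that the functions f^{∂𝓛_1}, …, f^{∂𝓛_k} : F_p^n → ℝ are linearly independent over ℝ. Then there exists ε > 0 such that {(t_{𝓛_1}(f), …, t_{𝓛_k}(f)) + z : z ∈ ℝ^k, ‖z‖_∞ ≤ ε} ⊆ {(t_{𝓛_1}(g), …, t_{𝓛_k}(g)) : g : F_p^n → (0,1)}. -/

import Mathlib

open Filter Topology

noncomputable section

namespace Paper

/-- The average (expectation) of a complex-valued function over a finite type. -/
def expC {α : Type*} [Fintype α] (f : α → ℂ) : ℂ := (∑ x, f x) / (Fintype.card α : ℂ)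

/-- The average (expectation) of a real-valued function over a finite type. -/
def expR {α : Type*} [Fintype α] (f : α → ℝ) : ℝ := (∑ x, f x) / (Fintype.card α : ℝ)

variable (p : ℕ) [NeZero p]

/-- `e_p(m) = exp(2 π i m / p)`. -/
def ep (m : ZMod p) : ℂ :=
  Complex.exp (2 * (Real.pi : ℂ) * Complex.I * (m.val : ℂ) / (p : ℂ))

/-- The Gowers uniformity norm `‖f‖_{U^k}` of `f : F_p^n → ℂ`. -/
def gowersNorm (n k : ℕ) (f : (Fin n → ZMod p) → ℂ) : ℝ :=
  (norm (expC (fun xy : (Fin n → ZMod p) × (Fin k → Fin n → ZMod p) =>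
      ∏ S : Finset (Fin k),
        (fun z => (starRingEnd ℂ) z)^[k - S.card] (f (xy.1 + ∑ i ∈ S, xy.2 i))))) ^
    (((2 : ℝ) ^ k)⁻¹)

/-- Inner product `⟨f, g⟩ = 𝔼[f ⬝ conj g]`. -/
def inn (n : ℕ) (f g : (Fin n → ZMod p) → ℂ) : ℂ :=
  expC (fun x => f x * (starRingEnd ℂ) (g x))

/-- Correlation norm `‖f‖_{u(D)}` for a set `D` of complex-valued functions. -/
def uNormC (n : ℕ) (D : Set ((Fin n → ZMod p) → ℂ)) (f : (Fin n → ZMod p) → ℂ) : ℝ :=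
  ⨆ g ∈ D, norm (inn p n f g)

/-- Correlation norm `‖f‖_{u(D)}` for a set `D` of `F_p`-valued functions. -/
def uNormF (n : ℕ) (D : Set ((Fin n → ZMod p) → ZMod p)) (f : (Fin n → ZMod p) → ℂ) : ℝ :=
  ⨆ g ∈ D, norm (inn p n f (fun x => ep p (g x)))

/-- The bias of `f : F_p^n → F_p`. -/
def biasF (n : ℕ) (f : (Fin n → ZMod p) → ZMod p) : ℝ :=
  norm (expC (fun x => ep p (f x)))

/-- Evaluation of a linear form `L ∈ F_p^k` at `X ∈ (F_p^n)^k`. -/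
def applyLF (n k : ℕ) (L : Fin k → ZMod p) (X : Fin k → Fin n → ZMod p) :
    Fin n → ZMod p := ∑ i, L i • X i

/-- `t_𝓛(f)` for a system of linear forms given as a tuple `L`. -/
def tL (n k m : ℕ) (L : Fin m → Fin k → ZMod p) (f : (Fin n → ZMod p) → ℂ) : ℂ :=
  expC (fun X : Fin k → Fin n → ZMod p => ∏ i, f (applyLF p n k (L i) X))

/-- `t_𝓛(f)` for a real-valued function. -/
def tLR (n k m : ℕ) (L : Fin m → Fin k → ZMod p) (f : (Fin n → ZMod p) → ℝ) : ℝ :=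
  expR (fun X : Fin k → Fin n → ZMod p => ∏ i, f (applyLF p n k (L i) X))

/-- `t_{𝓛,α}(f)`, the average with conjugations `α`. -/
def tLA (n k m : ℕ) (L : Fin m → Fin k → ZMod p) (α : Fin m → Bool)
    (f : (Fin n → ZMod p) → ℂ) : ℂ :=
  expC (fun X : Fin k → Fin n → ZMod p =>
    ∏ i, if α i then (starRingEnd ℂ) (f (applyLF p n k (L i) X))
      else f (applyLF p n k (L i) X))

/-- `t*_{𝓛,β}(f)`, the average with coefficients `β ∈ F_p^m`. -/
def tLstar (n k m : ℕ) (L : Fin m → Fin k → ZMod p) (β : Fin m → ZMod p)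
    (f : (Fin n → ZMod p) → ZMod p) : ℂ :=
  expC (fun X : Fin k → Fin n → ZMod p => ep p (∑ i, β i * f (applyLF p n k (L i) X)))

/-- A system of linear forms is homogeneous if, for uniform `X`, the joint distribution of
`(L₁(X),…,L_m(X))` is invariant under simultaneous translation by any constant `c`. -/
def IsHomogeneous (k m : ℕ) (L : Fin m → Fin k → ZMod p) : Prop :=
  ∀ (n : ℕ) (c : Fin n → ZMod p) (y : Fin m → Fin n → ZMod p),
    {X : Fin k → Fin n → ZMod p | ∀ i, applyLF p n k (L i) X = y i}.ncard =
    {X : Fin k → Fin n → ZMod p | ∀ i, applyLF p n k (L i) X + c = y i}.ncard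

/-- Cauchy–Schwarz complexity at most `s`. -/
def CSComplexityLE (k m : ℕ) (L : Fin m → Fin k → ZMod p) (s : ℕ) : Prop :=
  ∀ i : Fin m, ∃ φ : Fin m → Fin (s + 1), ∀ c : Fin (s + 1),
    L i ∉ Submodule.span (ZMod p) (L '' {j | j ≠ i ∧ φ j = c})

/-- True complexity at most `d`. -/
def TrueComplexityLE (k m : ℕ) (L : Fin m → Fin k → ZMod p) (d : ℕ) : Prop :=
  ∀ ε : ℝ, 0 < ε → ∃ δ : ℝ, 0 < δ ∧ ∀ (n : ℕ) (f : (Fin n → ZMod p) → ℂ),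
    (∀ x, norm (f x) ≤ 1) → gowersNorm p n (d + 1) f ≤ δ →
      norm (tL p n k m L f) ≤ ε

/-- True complexity exactly `d`. -/
def TrueComplexityEq (k m : ℕ) (L : Fin m → Fin k → ZMod p) (d : ℕ) : Prop :=
  TrueComplexityLE p k m L d ∧ ∀ e, e < d → ¬ TrueComplexityLE p k m L e

/-- Iterated additive derivative of `P : F_p^n → F_p` in a list of directions. -/
def derivList (n : ℕ) :
    List (Fin n → ZMod p) → ((Fin n → ZMod p) → ZMod p) → ((Fin n → ZMod p) → ZMod p)
  | [], P => P
  | y :: ys, P => derivList n ys (fun x => P (x + y) - P x)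

/-- `P` is a polynomial of degree at most `d`: all `(d+1)`-fold derivatives vanish. -/
def DegLE (n : ℕ) (P : (Fin n → ZMod p) → ZMod p) (d : ℕ) : Prop :=
  ∀ ys : List (Fin n → ZMod p), ys.length = d + 1 → derivList p n ys P = 0

/-- `P` is a polynomial of degree exactly `d`. -/
def DegEq (n : ℕ) (P : (Fin n → ZMod p) → ZMod p) (d : ℕ) : Prop :=
  DegLE p n P d ∧ ∀ e, e < d → ¬ DegLE p n P e

/-- `rank(P) > r`: `P` cannot be written as a function of `r` polynomials of degree
at most `deg(P) − 1`. -/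
def RankGT (n : ℕ) (P : (Fin n → ZMod p) → ZMod p) (r : ℕ) : Prop :=
  ∀ d : ℕ, DegEq p n P d →
    ¬ ∃ (Q : Fin r → (Fin n → ZMod p) → ZMod p) (Γ : (Fin r → ZMod p) → ZMod p),
      (∀ i, DegLE p n (Q i) (d - 1)) ∧ ∀ x, P x = Γ (fun i => Q i x)

/-- `rank(P) ≥ r`. -/
def RankGE (n : ℕ) (P : (Fin n → ZMod p) → ZMod p) (r : ℕ) : Prop :=
  ∀ r' : ℕ, r' < r → RankGT p n P r'

/-- Extension of a function on `F_p^n` to `F_p^m` (`m ≥ n`) by ignoring the extra coordinates. -/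
def extendFun {β : Type*} {n m : ℕ} (h : n ≤ m) (g : (Fin n → ZMod p) → β) :
    (Fin m → ZMod p) → β := fun x => g (fun i => x (Fin.castLE h i))

/-- (A1) Consistency for `F_p`-valued families. -/
def ConsistentF (D : ∀ n : ℕ, Set ((Fin n → ZMod p) → ZMod p)) : Prop :=
  ∀ (n m : ℕ) (h : n ≤ m), ∀ g ∈ D n, extendFun p h g ∈ D m

/-- Consistency for unit-disc-valued families: `D_n ⊆ D_{n+1}`. -/
def ConsistentC (D : ∀ n : ℕ, Set ((Fin n → ZMod p) → ℂ)) : Prop :=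
  ∀ n : ℕ, ∀ g ∈ D n, extendFun p (Nat.le_succ n) g ∈ D (n + 1)

/-- (A2) Affine invariance. -/
def AffineInvariant (D : ∀ n : ℕ, Set ((Fin n → ZMod p) → ZMod p)) : Prop :=
  ∀ n : ℕ, ∀ g ∈ D n,
    ∀ (T : (Fin n → ZMod p) ≃ₗ[ZMod p] (Fin n → ZMod p)) (c : Fin n → ZMod p),
      (fun x => g (T x + c)) ∈ D n

/-- (A3) Sparsity: `|D_n| ≤ p^{ε p^n}` for every `ε > 0` and all large enough `n`. -/
def Sparse (D : ∀ n : ℕ, Set ((Fin n → ZMod p) → ZMod p)) : Prop :=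
  ∀ ε : ℝ, 0 < ε → ∃ n₀ : ℕ, ∀ n, n₀ ≤ n →
    (Nat.card (D n) : ℝ) ≤ (p : ℝ) ^ (ε * (p : ℝ) ^ n)

/-- A proper dual family: consistent, affine invariant and sparse. -/
def ProperDual (D : ∀ n : ℕ, Set ((Fin n → ZMod p) → ZMod p)) : Prop :=
  ConsistentF p D ∧ AffineInvariant p D ∧ Sparse p D

/-- The family `D` is correlation testable with `q` queries. -/
def CorrTestable (q : ℕ) (D : ∀ n : ℕ, Set ((Fin n → ZMod p) → ZMod p)) : Prop :=
  ∃ (Γ : (Fin q → ZMod p) → Bool) (μ : ∀ n : ℕ, (Fin q → Fin n → ZMod p) → ℝ),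
    (∀ n x, 0 ≤ μ n x) ∧ (∀ n, ∑ x, μ n x = 1) ∧
    ∀ ε : ℝ, 0 < ε → ∃ (δ θm θp : ℝ) (n₀ : ℕ),
      0 < δ ∧ δ < ε ∧ 0 ≤ θm ∧ θm < θp ∧ θp ≤ 1 ∧
      ∀ n, n₀ < n → ∀ f : (Fin n → ZMod p) → ZMod p,
        (ε ≤ uNormF p n (D n) (fun x => ep p (f x)) →
          θp ≤ ∑ x, μ n x * (if Γ (fun i => f (x i)) = true then 1 else 0)) ∧
        (uNormF p n (D n) (fun x => ep p (f x)) ≤ δ →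
          (∑ x, μ n x * (if Γ (fun i => f (x i)) = true then 1 else 0)) ≤ θm)

/-- Strong correlation testability by linear systems with true complexity `d` and
Cauchy–Schwarz complexity `s`. -/
def StronglyCorrTestable (D : ∀ n : ℕ, Set ((Fin n → ZMod p) → ℂ))
    (d s : ℕ) : Prop :=
  ∀ ε : ℝ, 0 < ε → ∃ (δ : ℝ) (n₀ ℓ : ℕ) (kk mm : Fin ℓ → ℕ)
      (L : ∀ i, Fin (mm i) → Fin (kk i) → ZMod p) (α : ∀ i, Fin (mm i) → Bool),
    0 < δ ∧ δ < ε ∧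
    (∀ i, Function.Injective (L i)) ∧
    (∀ i, IsHomogeneous p (kk i) (mm i) (L i)) ∧
    (∀ i, TrueComplexityLE p (kk i) (mm i) (L i) d) ∧
    (∀ i, CSComplexityLE p (kk i) (mm i) (L i) s) ∧
    Disjoint
      (closure {v : Fin ℓ → ℂ | ∃ (n : ℕ) (f : (Fin n → ZMod p) → ℂ),
        n₀ ≤ n ∧ (∀ x, norm (f x) ≤ 1) ∧ ε ≤ uNormC p n (D n) f ∧
        v = fun i => tLA p n (kk i) (mm i) (L i) (α i) f})
      (closure {v : Fin ℓ → ℂ | ∃ (n : ℕ) (f : (Fin n → ZMod p) → ℂ),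
        n₀ ≤ n ∧ (∀ x, norm (f x) ≤ 1) ∧ uNormC p n (D n) f ≤ δ ∧
        v = fun i => tLA p n (kk i) (mm i) (L i) (α i) f})

/-- `k ∈ S(D)`: there are polynomials of degree exactly `k` and arbitrarily high rank
with noticeable correlation with `D`. -/
def memS (D : ∀ n : ℕ, Set ((Fin n → ZMod p) → ℂ)) (k : ℕ) : Prop :=
  1 ≤ k ∧ ∀ r : ℕ → ℕ, Monotone r → ∃ n₀ a : ℕ, ∀ n, n₀ ≤ n →
    ∃ P : (Fin n → ZMod p) → ZMod p, DegEq p n P k ∧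
      (1 : ℝ) / (a : ℝ) ≤ uNormC p n (D n) (fun x => ep p (P x)) ∧
      RankGT p n P (r a)

/-- `Γ x` is a probability distribution on `F_p` for every `x`. -/
def IsDist (n : ℕ) (Γ : (Fin n → ZMod p) → ZMod p → ℝ) : Prop :=
  (∀ x c, 0 ≤ Γ x c) ∧ ∀ x, ∑ c, Γ x c = 1

/-- `a_c(μ) = E_{z ∼ μ}[e_p(c z)]`. -/
def aC (c : ZMod p) (μ : ZMod p → ℝ) : ℂ :=
  ∑ z : ZMod p, (μ z : ℂ) * ep p (c * z)

/-- `t*_{𝓛,β}(Γ)` for a distributional function `Γ`. -/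
def tLstarDist (n k m : ℕ) (L : Fin m → Fin k → ZMod p) (β : Fin m → ZMod p)
    (Γ : (Fin n → ZMod p) → ZMod p → ℝ) : ℂ :=
  expC (fun X : Fin k → Fin n → ZMod p => ∏ i, aC p (β i) (Γ (applyLF p n k (L i) X)))

/-- The probability of sampling the function `F` from the distributional function `Γ`
(independently at each point). -/
def probFun (n : ℕ) (Γ : (Fin n → ZMod p) → ZMod p → ℝ)
    (F : (Fin n → ZMod p) → ZMod p) : ℝ :=
  ∏ x, Γ x (F x)

/-- Conditional expectation of a distributional function w.r.t. the polynomial factor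
defined by `P₁, …, P_C`. -/
def condExpDist (n C : ℕ) (P : Fin C → (Fin n → ZMod p) → ZMod p)
    (Γ : (Fin n → ZMod p) → ZMod p → ℝ) : (Fin n → ZMod p) → ZMod p → ℝ :=
  fun x c =>
    (∑ y ∈ Finset.univ.filter (fun y : Fin n → ZMod p => ∀ j, P j y = P j x), Γ y c) /
    ((Finset.univ.filter (fun y : Fin n → ZMod p => ∀ j, P j y = P j x)).card : ℝ)

/-- Connectivity of a system of linear forms given as a tuple. -/
def ConnectedSystem (k m : ℕ) (L : Fin m → Fin k → ZMod p) : Prop :=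
  ∀ S : Finset (Fin m), S.Nonempty → S ≠ Finset.univ →
    Submodule.span (ZMod p) (L '' ↑S) ⊓ Submodule.span (ZMod p) (L '' ↑(Sᶜ)) ≠ ⊥

/-- Isomorphism of two systems of linear forms (given as injective tuples):
a bijection preserving all linear relations, i.e. extending to an invertible linear map
between the spans. -/
def SystemsIso {k₁ m₁ k₂ m₂ : ℕ}
    (L₁ : Fin m₁ → Fin k₁ → ZMod p) (L₂ : Fin m₂ → Fin k₂ → ZMod p) : Prop :=
  ∃ σ : Fin m₁ ≃ Fin m₂, ∀ c : Fin m₁ → ZMod p,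
    (∑ i, c i • L₁ i) = 0 ↔ (∑ i, c i • L₂ (σ i)) = 0

/-- Connectivity of a system of linear forms given as a finite set. -/
def ConnectedFinset {k : ℕ} (𝓛 : Finset (Fin k → ZMod p)) : Prop :=
  ∀ S : Finset (Fin k → ZMod p), S ⊆ 𝓛 → S.Nonempty → S ≠ 𝓛 →
    Submodule.span (ZMod p) (S : Set (Fin k → ZMod p)) ⊓
      Submodule.span (ZMod p) ((𝓛 \ S : Finset (Fin k → ZMod p)) : Set (Fin k → ZMod p)) ≠ ⊥

/-- Isomorphism of two systems of linear forms given as finite sets. -/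
def FinsetIso {k₁ k₂ : ℕ}
    (A : Finset (Fin k₁ → ZMod p)) (B : Finset (Fin k₂ → ZMod p)) : Prop :=
  ∃ e : {x // x ∈ A} ≃ {x // x ∈ B}, ∀ c : {x // x ∈ A} → ZMod p,
    (∑ x : {x // x ∈ A}, c x • (x : Fin k₁ → ZMod p)) = 0 ↔
    (∑ x : {x // x ∈ A}, c x • ((e x : Fin k₂ → ZMod p))) = 0

/-- Isomorphism of two 1-flagged systems of linear forms: a relation-preserving bijection
whose linear extension carries one flag to the other. -/
def FlaggedIso {k₁ k₂ : ℕ}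
    (A : Finset (Fin k₁ → ZMod p)) (M₁ : Fin k₁ → ZMod p)
    (B : Finset (Fin k₂ → ZMod p)) (M₂ : Fin k₂ → ZMod p) : Prop :=
  ∃ e : {x // x ∈ A} ≃ {x // x ∈ B},
    (∀ c : {x // x ∈ A} → ZMod p,
      (∑ x : {x // x ∈ A}, c x • (x : Fin k₁ → ZMod p)) = 0 ↔
      (∑ x : {x // x ∈ A}, c x • ((e x : Fin k₂ → ZMod p))) = 0) ∧
    (∀ c : {x // x ∈ A} → ZMod p,
      (∑ x : {x // x ∈ A}, c x • (x : Fin k₁ → ZMod p)) = M₁ →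
      (∑ x : {x // x ∈ A}, c x • ((e x : Fin k₂ → ZMod p))) = M₂)

/-- The underlying (unflagged) system of the product of two 1-flagged systems,
relative to the chosen surjection `T`. -/
def productSystem {k₀ k₁ : ℕ}
    (𝓛₀ : Finset (Fin k₀ → ZMod p)) (𝓛₁ : Finset (Fin k₁ → ZMod p))
    (T : (Fin (k₀ + k₁) → ZMod p) →ₗ[ZMod p] (Fin (k₀ + k₁ - 1) → ZMod p)) :
    Finset (Fin (k₀ + k₁ - 1) → ZMod p) :=
  (𝓛₀.image (fun L => Fin.append L (0 : Fin k₁ → ZMod p)) ∪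
    𝓛₁.image (fun L => Fin.append (0 : Fin k₀ → ZMod p) L)).image (fun v => T v)

/-- `f^{(𝓛∖{Lᵢ})^{Lᵢ}}(x)`: conditional average of `∏_{j ≠ i} f(L_j(X))` given `Lᵢ(X) = x`. -/
def flagCondAvg (n k m : ℕ) (L : Fin m → Fin k → ZMod p) (i : Fin m)
    (f : (Fin n → ZMod p) → ℂ) (x : Fin n → ZMod p) : ℂ :=
  (∑ X ∈ Finset.univ.filter (fun X : Fin k → Fin n → ZMod p => applyLF p n k (L i) X = x),
      ∏ j ∈ Finset.univ.erase i, f (applyLF p n k (L j) X)) /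
  (((Finset.univ.filter
      (fun X : Fin k → Fin n → ZMod p => applyLF p n k (L i) X = x)).card : ℂ))

/-- `f^{∂𝓛}(x) = Σ_{L ∈ 𝓛} f^{(𝓛∖{L})^L}(x)`. -/
def partialL (n k m : ℕ) (L : Fin m → Fin k → ZMod p)
    (f : (Fin n → ZMod p) → ℂ) (x : Fin n → ZMod p) : ℂ :=
  ∑ i, flagCondAvg p n k m L i f x

/-- Real-valued version of `flagCondAvg`. -/
def flagCondAvgR (n k m : ℕ) (L : Fin m → Fin k → ZMod p) (i : Fin m)
    (f : (Fin n → ZMod p) → ℝ) (x : Fin n → ZMod p) : ℝ :=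
  (∑ X ∈ Finset.univ.filter (fun X : Fin k → Fin n → ZMod p => applyLF p n k (L i) X = x),
      ∏ j ∈ Finset.univ.erase i, f (applyLF p n k (L j) X)) /
  (((Finset.univ.filter
      (fun X : Fin k → Fin n → ZMod p => applyLF p n k (L i) X = x)).card : ℝ))

/-- Real-valued version of `partialL`. -/
def partialLR (n k m : ℕ) (L : Fin m → Fin k → ZMod p)
    (f : (Fin n → ZMod p) → ℝ) (x : Fin n → ZMod p) : ℝ :=
  ∑ i, flagCondAvgR p n k m L i f x

/-- `t_𝓛` viewed as a formal polynomial in the variables `{f(x) : x ∈ F_p^n}`. -/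
def tLPoly (n k m : ℕ) (L : Fin m → Fin k → ZMod p) :
    MvPolynomial (Fin n → ZMod p) ℂ :=
  MvPolynomial.C (((p : ℂ) ^ (n * k))⁻¹) *
    ∑ X : Fin k → Fin n → ZMod p, ∏ i, MvPolynomial.X (applyLF p n k (L i) X)

/-!
The profile map `g ↦ (t_{𝓛_i}(g))_i` is a polynomial on `ℝ^{F_p^n}`. Since every form of
`𝓛_i` is nonzero, each `L(X)` is uniformly distributed, and conditioning on it shows that the
derivative of `t_{𝓛_i}` at `f` is `h ↦ 𝔼[h f^{∂𝓛_i}]`. Linear independence of the `f^{∂𝓛_i}`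
makes the derivative of the profile map surjective, so by the local surjection theorem for
strictly differentiable maps the image of the open cube `(0,1)^{F_p^n}` around `f` is a
neighbourhood of the profile of `f`.
-/

open Finset

lemma Matrix.mulVec_surjective_of_linearIndependent_row {m n R : Type*} [Field R] [Fintype m]
    [Fintype n] {A : Matrix m n R} (hA : LinearIndependent R A.row) :
    Function.Surjective A.mulVec := by
  have hrange : LinearMap.range A.mulVecLin = ⊤ := Submodule.eq_top_of_finrank_eq <|
    hA.rank_matrix.trans (Module.finrank_fintype_fun_eq_card R).symm
  exact LinearMap.range_eq_top.1 hrange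

section Expectation

variable {α : Type*} [Fintype α]

lemma expR_sum {ι : Type*} (s : Finset ι) (F : ι → α → ℝ) :
    expR (fun a => ∑ i ∈ s, F i a) = ∑ i ∈ s, expR (F i) := by
  simp only [expR, sum_comm (s := s), sum_div]

lemma expR_mul_comp_eq_expR_mul_fiberAvg {G H : Type*} [AddGroup G] [Fintype G] [AddGroup H]
    [Fintype H] [DecidableEq H] (φ : G →+ H) (hφ : Function.Surjective φ)
    (F : G → ℝ) (h : H → ℝ) :
    expR (fun g => F g * h (φ g)) =
      expR (fun x => h x * ((∑ g ∈ {g | φ g = x}, F g) / (#{g | φ g = x} : ℝ))) := by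
  have hfiber : ∀ x, #{g | φ g = x} = #{g | φ g = 0} := fun x =>
    AddMonoidHom.card_fiber_eq_of_mem_range φ (hφ x) (hφ 0)
  have hcard : Fintype.card G = Fintype.card H * #{g | φ g = 0} := by
    rw [← card_univ, card_eq_sum_card_fiberwise (f := φ) (t := univ) (by simp)]
    simp [hfiber]
  have hpos : (0 : ℝ) < #{g | φ g = 0} := by exact_mod_cast card_pos.2 ⟨0, by simp⟩
  simp only [expR, hfiber, hcard, Nat.cast_mul, ← sum_fiberwise univ φ]
  rw [sum_div, sum_div]
  refine sum_congr rfl fun x _ => ?_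
  rw [sum_congr rfl fun g hg => by rw [(mem_filter.1 hg).2], ← sum_mul]
  field_simp

def expRMul (v : α → ℝ) : (α → ℝ) →L[ℝ] ℝ :=
  (Fintype.card α : ℝ)⁻¹ • ∑ x, v x • ContinuousLinearMap.proj x

lemma expRMul_apply (v h : α → ℝ) : expRMul v h = expR (fun x => h x * v x) := by
  simp [expRMul, expR, div_eq_inv_mul, mul_comm]

lemma range_pi_expRMul_eq_top {ι : Type*} [Fintype ι] (v : ι → α → ℝ)
    (hv : LinearIndependent ℝ v) :
    LinearMap.range (ContinuousLinearMap.pi fun i => expRMul (v i) :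
      (α → ℝ) →ₗ[ℝ] (ι → ℝ)) = ⊤ := by
  refine LinearMap.range_eq_top.2 fun y => ?_
  obtain ⟨h, hh⟩ := Matrix.mulVec_surjective_of_linearIndependent_row (A := Matrix.of v) hv
    ((Fintype.card α : ℝ) • y)
  refine ⟨h, funext fun i => ?_⟩
  have hi := congrFun hh i
  simp only [Matrix.mulVec, dotProduct, Matrix.of_apply, Pi.smul_apply, smul_eq_mul] at hi
  rw [ContinuousLinearMap.coe_coe, ContinuousLinearMap.pi_apply, expRMul_apply, expR]
  simp only [mul_comm (h _), hi]
  have : Nonempty α := (Function.ne_iff.1 (hv.ne_zero i)).nonempty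
  field_simp

end Expectation

section LinearForms

variable {p n k m : ℕ}

def applyLFHom (L : Fin k → ZMod p) : (Fin k → Fin n → ZMod p) →+ (Fin n → ZMod p) where
  toFun := applyLF p n k L
  map_zero' := by simp [applyLF]
  map_add' X Y := by simp [applyLF, smul_add, sum_add_distrib]

variable [Fact p.Prime]

lemma applyLF_surjective {L : Fin k → ZMod p} (hL : L ≠ 0) :
    Function.Surjective (applyLF p n k L) := by
  obtain ⟨i, hi⟩ := Function.ne_iff.1 hL
  refine fun y => ⟨Pi.single i ((L i)⁻¹ • y), ?_⟩
  rw [applyLF, sum_eq_single i (fun j _ hj => by simp [hj]) (by simp)]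
  simp [smul_smul, mul_inv_cancel₀ hi]

lemma expR_prod_erase_mul_eq_expR_mul_flagCondAvgR
    {L : Fin m → Fin k → ZMod p} {j : Fin m} (hL : L j ≠ 0) (f h : (Fin n → ZMod p) → ℝ) :
    expR (fun X => (∏ j' ∈ univ.erase j, f (applyLF p n k (L j') X)) * h (applyLF p n k (L j) X))
      = expR (fun x => h x * flagCondAvgR p n k m L j f x) :=
  expR_mul_comp_eq_expR_mul_fiberAvg (applyLFHom (L j)) (applyLF_surjective hL) _ h

lemma expR_sum_prod_erase_mul_eq_expR_mul_partialLR
    {L : Fin m → Fin k → ZMod p} (hL : ∀ j, L j ≠ 0) (f h : (Fin n → ZMod p) → ℝ) :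
    expR (fun X => ∑ j, (∏ j' ∈ univ.erase j, f (applyLF p n k (L j') X)) *
        h (applyLF p n k (L j) X))
      = expR (fun x => h x * partialLR p n k m L f x) := by
  simp only [partialLR, mul_sum, expR_sum,
    expR_prod_erase_mul_eq_expR_mul_flagCondAvgR (hL _)]

theorem hasStrictFDerivAt_tLR {L : Fin m → Fin k → ZMod p} (hL : ∀ j, L j ≠ 0)
    (f : (Fin n → ZMod p) → ℝ) :
    HasStrictFDerivAt (tLR p n k m L) (expRMul (partialLR p n k m L f)) f := by
  have hmonomial : ∀ X : Fin k → Fin n → ZMod p,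
      HasStrictFDerivAt (fun g : (Fin n → ZMod p) → ℝ => ∏ j, g (applyLF p n k (L j) X))
        (∑ j, (∏ j' ∈ univ.erase j, f (applyLF p n k (L j') X)) •
          ContinuousLinearMap.proj (applyLF p n k (L j) X)) f := fun X =>
    HasStrictFDerivAt.finsetProd
      (g := fun j (g : (Fin n → ZMod p) → ℝ) => g (applyLF p n k (L j) X))
      fun j _ => (ContinuousLinearMap.proj (R := ℝ) (φ := fun _ => ℝ) _).hasStrictFDerivAt
  have htLR : tLR p n k m L = fun g =>
      (Fintype.card (Fin k → Fin n → ZMod p) : ℝ)⁻¹ •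
        ∑ X : Fin k → Fin n → ZMod p, ∏ j, g (applyLF p n k (L j) X) := by
    funext g
    simp [tLR, expR, div_eq_inv_mul]
  rw [htLR]
  refine ((HasStrictFDerivAt.fun_sum fun X _ => hmonomial X).fun_const_smul
    (Fintype.card (Fin k → Fin n → ZMod p) : ℝ)⁻¹).congr_fderiv ?_
  ext h
  rw [expRMul_apply, ← expR_sum_prod_erase_mul_eq_expR_mul_partialLR hL]
  simp [expR, div_eq_inv_mul]

end LinearForms

theorem statement19_general (p n : ℕ) [NeZero p] (hp : p.Prime) (ℓ : ℕ) (kk mm : Fin ℓ → ℕ)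
    (L : ∀ i, Fin (mm i) → Fin (kk i) → ZMod p)
    (hnz : ∀ i j, L i j ≠ 0)
    (f : (Fin n → ZMod p) → ℝ) (hf : ∀ x, f x ∈ Set.Ioo (0 : ℝ) 1)
    (hind : LinearIndependent ℝ (fun i : Fin ℓ => partialLR p n (kk i) (mm i) (L i) f)) :
    ∃ ε : ℝ, 0 < ε ∧ ∀ z : Fin ℓ → ℝ, ‖z‖ ≤ ε →
      ∃ g : (Fin n → ZMod p) → ℝ, (∀ x, g x ∈ Set.Ioo (0 : ℝ) 1) ∧
        (fun i => tLR p n (kk i) (mm i) (L i) f + z i) =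
        (fun i => tLR p n (kk i) (mm i) (L i) g) := by
  have : Fact p.Prime := ⟨hp⟩
  set Φ : ((Fin n → ZMod p) → ℝ) → (Fin ℓ → ℝ) := fun g i => tLR p n (kk i) (mm i) (L i) g
  have hderiv : HasStrictFDerivAt Φ
      (ContinuousLinearMap.pi fun i => expRMul (partialLR p n (kk i) (mm i) (L i) f)) f :=
    hasStrictFDerivAt_pi.2 fun i => hasStrictFDerivAt_tLR (hnz i) f
  have hU : Set.univ.pi (fun _ => Set.Ioo (0 : ℝ) 1) ∈ 𝓝 f :=
    (isOpen_set_pi Set.finite_univ fun _ _ => isOpen_Ioo).mem_nhds (Set.mem_univ_pi.2 hf)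
  have himage : Φ '' Set.univ.pi (fun _ => Set.Ioo (0 : ℝ) 1) ∈ 𝓝 (Φ f) := by
    rw [← hderiv.map_nhds_eq_of_surj (range_pi_expRMul_eq_top _ hind)]
    exact image_mem_map hU
  obtain ⟨ε, hε, hball⟩ := Metric.nhds_basis_closedBall.mem_iff.1 himage
  refine ⟨ε, hε, fun z hz => ?_⟩
  obtain ⟨g, hg, hgf⟩ := hball (a := Φ f + z) (by simpa [dist_eq_norm] using hz)
  exact ⟨g, Set.mem_univ_pi.1 hg, hgf.symm⟩

/-- Claim: linear independence of the `f^{∂𝓛_i}` gives a full-dimensional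
neighbourhood of the profile. Let `𝓛_1, …, 𝓛_ℓ` be systems of (nonzero) linear forms and
`f : F_p^n → (0,1)` be such that `f^{∂𝓛_1}, …, f^{∂𝓛_ℓ}` are linearly independent over `ℝ`.
Then there is `ε > 0` such that every point within `L^∞`-distance `ε` of
`(t_{𝓛_1}(f), …, t_{𝓛_ℓ}(f))` is the profile of some `g : F_p^n → (0,1)`. -/
theorem statement19 (p n : ℕ) [NeZero p] (hp : p.Prime) (ℓ : ℕ) (kk mm : Fin ℓ → ℕ)
    (L : ∀ i, Fin (mm i) → Fin (kk i) → ZMod p)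
    (hinj : ∀ i, Function.Injective (L i))
    (hnz : ∀ i j, L i j ≠ 0)
    (f : (Fin n → ZMod p) → ℝ) (hf : ∀ x, f x ∈ Set.Ioo (0 : ℝ) 1)
    (hind : LinearIndependent ℝ (fun i : Fin ℓ => partialLR p n (kk i) (mm i) (L i) f)) :
    ∃ ε : ℝ, 0 < ε ∧ ∀ z : Fin ℓ → ℝ, ‖z‖ ≤ ε →
      ∃ g : (Fin n → ZMod p) → ℝ, (∀ x, g x ∈ Set.Ioo (0 : ℝ) 1) ∧
        (fun i => tLR p n (kk i) (mm i) (L i) f + z i) =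
        (fun i => tLR p n (kk i) (mm i) (L i) g) :=
  statement19_general p n hp ℓ kk mm L hnz f hf hind

end Paper
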